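/- Assume r ≥ 2. The element r_{r-1} r_r r_{r-1} of W commutes with s_r; moreover, if r ≥ 3 then for every integer a with 2 ≤ a ≤ r-1 one has (r_a r_{a-1}) s_a (r_a r_{a-1})^{-1} = s_{a-1} in W. -/

import Mathlib

noncomputable section

open CoxeterSystem

/-- The Coxeter matrix of the affine Weyl group of type `Ã_{2r}`:
vertices `0, …, 2r` arranged in a cycle mod `N = 2r+1`; `m i j = 3` if
`i - j ≡ ±1 (mod N)`, `m i j = 2` for other off-diagonal pairs. -/
def affACoxeterMatrix (r : ℕ) : CoxeterMatrix (Fin (2 * r + 1)) where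
  M i j := if i = j then 1 else if i = j + 1 ∨ j = i + 1 then 3 else 2
  isSymm := by
    apply Matrix.IsSymm.ext
    intro i j
    by_cases h : j = i
    · subst h; rfl
    · rw [if_neg h, if_neg (fun hh : i = j => h hh.symm)]
      exact if_congr or_comm rfl rfl
  diagonal i := if_pos rfl
  off_diagonal i j h := by
    try dsimp only
    rw [if_neg h]
    split <;> omega

/-- The affine Weyl group `W` of type `Ã_{2r}`, as the Coxeter group of the above matrix. -/
abbrev AffW (r : ℕ) : Type := (affACoxeterMatrix r).Group

/-- The canonical Coxeter system on `AffW r`. -/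
def affCS (r : ℕ) : CoxeterSystem (affACoxeterMatrix r) (AffW r) :=
  (affACoxeterMatrix r).toCoxeterSystem

open Fin.NatCast in
/-- The simple reflection `s i` (index taken mod `2r+1`). -/
def sgen (r i : ℕ) : AffW r := (affCS r).simple ((i : ℕ) : Fin (2 * r + 1))

open Fin.NatCast in
/-- The word in the simple reflections representing the generator `r_i` of the
relative Weyl group: `r_0 = s_0`, `r_i = s_i s_{2r+1-i}` for `1 ≤ i ≤ r-1`,
`r_r = s_r s_{r+1} s_r`. -/
def rword (r : ℕ) : ℕ → List (Fin (2 * r + 1)) := fun i =>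
  if i = 0 then [(0 : Fin (2 * r + 1))]
  else if i < r then [((i : ℕ) : Fin (2 * r + 1)), ((2 * r + 1 - i : ℕ) : Fin (2 * r + 1))]
  else [((r : ℕ) : Fin (2 * r + 1)), ((r + 1 : ℕ) : Fin (2 * r + 1)), ((r : ℕ) : Fin (2 * r + 1))]

/-- The element `r_i` of `W`. -/
def rgen (r i : ℕ) : AffW r := (affCS r).wordProd (rword r i)

/-- The list `[a, a+1, …, b]` (empty if `b < a`). -/
def ascSeq (a b : ℕ) : List ℕ := List.range' a (b + 1 - a)

/-- The list `[b, b-1, …, a]` (empty if `b < a`). -/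
def descSeq (a b : ℕ) : List ℕ := (List.range' a (b + 1 - a)).reverse

/-- The expansion, as a word in the simple reflections, of the block
`r_0 r_1 ⋯ r_{r-1} r_r r_{r-1} ⋯ r_k`. -/
def blockWord (r k : ℕ) : List (Fin (2 * r + 1)) :=
  ((ascSeq 0 r ++ descSeq k (r - 1)).map (rword r)).flatten

/-- The element `r_0 r_1 ⋯ r_{r-1} r_r r_{r-1} ⋯ r_k` of `W`. -/
def blockEl (r k : ℕ) : AffW r := (affCS r).wordProd (blockWord r k)

/-- The expansion, as a word in the simple reflections, of
`ϖ_k = (r_0 r_1 ⋯ r_{r-1} r_r r_{r-1} ⋯ r_k)^k`. -/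
def piWord (r k : ℕ) : List (Fin (2 * r + 1)) :=
  (List.replicate k (blockWord r k)).flatten

/-- The element `ϖ_k = (r_0 r_1 ⋯ r_{r-1} r_r r_{r-1} ⋯ r_k)^k` of `W`. -/
def piEl (r k : ℕ) : AffW r := (affCS r).wordProd (piWord r k)

/-- The expansion of the full block `r_0 r_1 ⋯ r_{r-1} r_r` as a word. -/
def fullBlockWord (r : ℕ) : List (Fin (2 * r + 1)) :=
  ((ascSeq 0 r).map (rword r)).flatten

/-- The element `r_0 r_1 ⋯ r_{r-1} r_r` of `W`. -/
def fullBlockEl (r : ℕ) : AffW r := (affCS r).wordProd (fullBlockWord r)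

/-!
Each identity involves only four simple reflections: `r_{r-1} = s_{r-1} s_{r+2}` and
`r_r = s_r s_{r+1} s_r` in the first, `r_a r_{a-1} = s_a s_{2r+1-a} s_{a-1} s_{2r+2-a}` in the
second. Simple reflections whose indices are not adjacent on the `(2r+1)`-cycle commute, so after
moving commuting factors past each other both identities reduce to a single braid relation
`s_i s_{i+1} s_i = s_{i+1} s_i s_{i+1}`.
-/

open Fin.NatCast

namespace CoxeterSystem

variable {B W : Type*} [Group W] {M : CoxeterMatrix B} (cs : CoxeterSystem M W) {i i' : B}

lemma wordProd_alternatingWord_eq_of_M_eq {m : ℕ} (h : M i i' = m) :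
    cs.wordProd (alternatingWord i i' m) = cs.wordProd (alternatingWord i' i m) := by
  have := cs.wordProd_braidWord_eq i i'
  rwa [braidWord, braidWord, M.symmetric i' i, h] at this

lemma commute_simple_of_M_eq_two (h : M i i' = 2) : Commute (cs.simple i) (cs.simple i') :=
  commute_iff_eq _ _ |>.mpr <| by
    simpa [alternatingWord, wordProd_cons] using cs.wordProd_alternatingWord_eq_of_M_eq h

lemma simple_braid_of_M_eq_three (h : M i i' = 3) :
    cs.simple i * cs.simple i' * cs.simple i = cs.simple i' * cs.simple i * cs.simple i' := by
  simpa [alternatingWord, wordProd_cons, mul_assoc] using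
    (cs.wordProd_alternatingWord_eq_of_M_eq h).symm

end CoxeterSystem

lemma affACoxeterMatrix_natCast {r x y : ℕ} (hx : x ≤ 2 * r) (hy : y ≤ 2 * r) :
    (affACoxeterMatrix r).M x y =
      if x = y then 1
      else if x = y + 1 ∨ y = x + 1 ∨ (x = 0 ∧ y = 2 * r) ∨ (y = 0 ∧ x = 2 * r) then 3
      else 2 := by
  simp only [affACoxeterMatrix, Fin.ext_iff, Fin.val_add_one, Fin.val_last,
    Fin.val_cast_of_lt (Nat.lt_succ_of_le hx), Fin.val_cast_of_lt (Nat.lt_succ_of_le hy)]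
  split_ifs <;> omega

lemma commute_sgen {r x y : ℕ} (hxy : x + 2 ≤ y) (hy : y ≤ 2 * r) (hwrap : y < x + 2 * r) :
    Commute (sgen r x) (sgen r y) := by
  refine (affCS r).commute_simple_of_M_eq_two ?_
  rw [affACoxeterMatrix_natCast (by omega) hy]
  split_ifs <;> omega

lemma sgen_braid {r x y : ℕ} (hxy : x + 1 = y) (hy : y ≤ 2 * r) :
    sgen r x * sgen r y * sgen r x = sgen r y * sgen r x * sgen r y := by
  refine (affCS r).simple_braid_of_M_eq_three ?_
  rw [affACoxeterMatrix_natCast (by omega) hy]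
  split_ifs <;> omega

lemma rgen_of_pos_of_lt {r i : ℕ} (hi0 : 0 < i) (hir : i < r) :
    rgen r i = sgen r i * sgen r (2 * r + 1 - i) := by
  simp [rgen, rword, hi0.ne', hir, sgen, CoxeterSystem.wordProd_cons]

lemma rgen_self {r : ℕ} (hr : 0 < r) : rgen r r = sgen r r * sgen r (r + 1) * sgen r r := by
  simp [rgen, rword, hr.ne', sgen, CoxeterSystem.wordProd_cons, mul_assoc]

section Group

variable {G : Type*} [Group G]

lemma commute_sandwich_of_braid {a b c d : G} (hab : a * b * a = b * a * b) (hac : Commute a c)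
    (had : Commute a d) (hbd : Commute b d) : Commute (a * d * (b * c * b) * (a * d)) b := by
  have braid (x : G) : a * (b * (a * x)) = b * (a * (b * x)) := by
    simp only [← mul_assoc, hab]
  show _ = _
  simp only [mul_assoc]
  calc a * (d * (b * (c * (b * (a * (d * b))))))
      = a * (d * (b * (c * (a * (b * (a * d)))))) := by rw [← hbd.eq, ← braid]
    _ = a * (b * (a * (d * (c * (b * (a * d)))))) := by
        rw [← hac.left_comm, ← hbd.left_comm, ← had.left_comm]
    _ = b * (a * (d * (b * (c * (b * (a * d)))))) := by rw [braid, hbd.left_comm]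

lemma conj_eq_of_braid {p q u v : G} (hpq : p * q * p = q * p * q) (hup : Commute u p)
    (huq : Commute u q) (hvp : Commute v p) : p * u * (q * v) * p * (p * u * (q * v))⁻¹ = q := by
  have braid (x : G) : p * (q * (p * x)) = q * (p * (q * x)) := by
    simp only [← mul_assoc, hpq]
  rw [mul_inv_eq_iff_eq_mul]
  simp only [mul_assoc]
  calc p * (u * (q * (v * p)))
      = p * (q * (p * (u * v))) := by rw [hvp.eq, huq.left_comm, hup.left_comm]
    _ = q * (p * (u * (q * v))) := by rw [braid, ← huq.left_comm]

end Group

/-- For `r ≥ 2`, the element `r_{r-1} r_r r_{r-1}` of `W` commutes with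
`s_r`; moreover, if `r ≥ 3`, then for every `2 ≤ a ≤ r-1` one has
`(r_a r_{a-1}) s_a (r_a r_{a-1})⁻¹ = s_{a-1}` in `W`. -/
theorem statement12 (r : ℕ) (hr : 2 ≤ r) :
    rgen r (r - 1) * rgen r r * rgen r (r - 1) * sgen r r =
        sgen r r * (rgen r (r - 1) * rgen r r * rgen r (r - 1)) ∧
      (3 ≤ r → ∀ a, 2 ≤ a → a ≤ r - 1 →
        rgen r a * rgen r (a - 1) * sgen r a * (rgen r a * rgen r (a - 1))⁻¹
          = sgen r (a - 1)) := by
  refine ⟨?_, fun _ a ha2 har => ?_⟩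
  · have hrr : 2 * r + 1 - (r - 1) = r + 2 := by omega
    rw [rgen_of_pos_of_lt (by omega) (by omega), hrr, rgen_self (by omega)]
    exact (commute_sandwich_of_braid (sgen_braid (by omega) (by omega))
      (commute_sgen (by omega) (by omega) (by omega))
      (commute_sgen (by omega) (by omega) (by omega))
      (commute_sgen (by omega) (by omega) (by omega))).eq
  · have haa : 2 * r + 1 - (a - 1) = 2 * r + 2 - a := by omega
    rw [rgen_of_pos_of_lt (i := a) (by omega) (by omega),
      rgen_of_pos_of_lt (i := a - 1) (by omega) (by omega), haa]
    exact conj_eq_of_braid (sgen_braid (by omega) (by omega)).symm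
      (commute_sgen (by omega) (by omega) (by omega)).symm
      (commute_sgen (by omega) (by omega) (by omega)).symm
      (commute_sgen (by omega) (by omega) (by omega)).symm
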